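/- For b1, b2, b3 ∈ ℂ let B4_{b1,b2,b3} denote the ℂ-vector space with basis {L, W, x} equipped with the operations extending W(1,0) by x∘L = x, L∘x = (b2 − b1b2)·L + b3·W + b1·x, x∘W = 0, W∘x = b2·W, x∘x = −b1b2²·L + b2b3·W + (b1b2 + b2)·x, [x,L] = 0, [x,W] = 0. Then: (i) B4_{b1,b2,b3} is a Gel'fand-Dorfman bialgebra containing W(1,0) as a subalgebra; (ii) B4_{b1,b2,b3} is equivalent to B4_{b1',b2',b3'} if and only if there exist c1, c2 ∈ ℂ and β ∈ ℂ* with b1 = b1', b2 = β·b2' + c1 and b3 = β·b3' − b1·c2; (iii) consequently, the equivalence classes in this family are represented exactly by B4_{0,0,0}, B4_{0,0,1}, and B4_{b1,0,0} for b1 ∈ ℂ*. -/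

import Mathlib

namespace GDExt

def IsNovikov {M : Type*} [AddCommGroup M] (mul : M → M → M) : Prop :=
  (∀ a b c, mul (mul a b) c - mul a (mul b c) = mul (mul b a) c - mul b (mul a c)) ∧
  ∀ a b c, mul (mul a b) c = mul (mul a c) b

def IsLieBracket {M : Type*} [AddCommGroup M] (br : M → M → M) : Prop :=
  (∀ a, br a a = 0) ∧ ∀ a b c, br a (br b c) = br (br a b) c + br b (br a c)

def IsGD {M : Type*} [AddCommGroup M] (mul br : M → M → M) : Prop :=
  IsNovikov mul ∧ IsLieBracket br ∧
  ∀ a b c, br a (mul b c) - br c (mul b a) + mul (br b a) c - mul (br b c) a - mul b (br a c) = 0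

variable {K : Type*} [Field K]
variable {A V : Type*} [AddCommGroup A] [Module K A] [AddCommGroup V] [Module K V]

/-- First component bilinear product of the unified product `A ♮ V`. -/
def uniMul (circ : A →ₗ[K] A →ₗ[K] A) (lA rA : A →ₗ[K] Module.End K V)
    (lV rV : V →ₗ[K] Module.End K A) (f : V →ₗ[K] V →ₗ[K] A)
    (st : V →ₗ[K] V →ₗ[K] V) : A × V → A × V → A × V :=
  fun p q =>
    (circ p.1 q.1 + lV p.2 q.1 + rV q.2 p.1 + f p.2 q.2,
     st p.2 q.2 + lA p.1 q.2 + rA q.1 p.2)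

/-- Bracket of the unified product `A ♮ V`. -/
def uniBr (brk : A →ₗ[K] A →ₗ[K] A) (tl : V →ₗ[K] A →ₗ[K] V) (tr : V →ₗ[K] A →ₗ[K] A)
    (hm : V →ₗ[K] V →ₗ[K] A) (vbr : V →ₗ[K] V →ₗ[K] V) : A × V → A × V → A × V :=
  fun p q =>
    (brk p.1 q.1 + tr p.2 q.1 - tr q.2 p.1 + hm p.2 q.2,
     vbr p.2 q.2 + tl p.2 q.1 - tl q.2 p.1)

end GDExt

namespace GDExt

/-- Equivalence of GD bialgebra structures on `ℂL ⊕ ℂW ⊕ ℂx` (coordinates `0 ↦ L`,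
`1 ↦ W`, `2 ↦ x`): a GD bialgebra isomorphism restricting to the identity on
`ℂL ⊕ ℂW`. -/
def GDequiv3 (m br m' br' : (Fin 3 → ℂ) → (Fin 3 → ℂ) → (Fin 3 → ℂ)) : Prop :=
  ∃ φ : (Fin 3 → ℂ) ≃ₗ[ℂ] (Fin 3 → ℂ),
    (∀ u v, φ (m u v) = m' (φ u) (φ v)) ∧
    (∀ u v, φ (br u v) = br' (φ u) (φ v)) ∧
    (∀ u : Fin 3 → ℂ, u 2 = 0 → φ u = u)

end GDExt

namespace GDExt

/-- The Novikov product of `B4_{b1,b2,b3}` in the basis `L = e0, W = e1, x = e2`. -/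
def B4mul (b1 b2 b3 : ℂ) : (Fin 3 → ℂ) → (Fin 3 → ℂ) → (Fin 3 → ℂ) :=
  fun u v =>
    ![u 0 * v 0 + (b2 - b1 * b2) * (u 0 * v 2) - b1 * b2 ^ 2 * (u 2 * v 2),
      b3 * (u 0 * v 2) + u 1 * v 0 + b2 * (u 1 * v 2) + b2 * b3 * (u 2 * v 2),
      b1 * (u 0 * v 2) + u 2 * v 0 + (b1 * b2 + b2) * (u 2 * v 2)]

/-- The Lie bracket of `B4_{b1,b2,b3}` (identically zero). -/
def B4br : (Fin 3 → ℂ) → (Fin 3 → ℂ) → (Fin 3 → ℂ) :=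
  fun _ _ => 0

/-!
Since the bracket of `B4_{b1,b2,b3}` vanishes, the GD compatibility condition is automatic and
only the Novikov identities need checking. A linear automorphism of `ℂL ⊕ ℂW ⊕ ℂx` fixing
`ℂL ⊕ ℂW` pointwise is a shear `x ↦ c1 L + c2 W + β x` with `β ≠ 0`; comparing the `x`-,
`W`- and `L`-components of `φ (L ∘ x)`, `φ (W ∘ x)` with the products of the images gives the
three relations between the parameters, and conversely these relations make the shear a
homomorphism. The normal forms follow by choosing `c1 = b2` and then either `β = b3`
(when `b1 = 0`) or `c2 = -b3 / b1`.
-/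

lemma isGD_zero_bracket {M : Type*} [AddCommGroup M] {mul : M → M → M} (h : IsNovikov mul)
    (hzero_left : ∀ a, mul 0 a = 0) (hzero_right : ∀ a, mul a 0 = 0) :
    IsGD mul (fun _ _ => 0) :=
  ⟨h, ⟨fun _ => rfl, fun _ _ _ => by simp⟩, fun _ _ _ => by simp [hzero_left, hzero_right]⟩

section Shear

variable {K : Type*} [Field K]

def shearEquiv (c1 c2 β : K) (hβ : β ≠ 0) : (Fin 3 → K) ≃ₗ[K] (Fin 3 → K) where
  toFun u := ![u 0 + c1 * u 2, u 1 + c2 * u 2, β * u 2]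
  invFun u := ![u 0 - c1 / β * u 2, u 1 - c2 / β * u 2, u 2 / β]
  map_add' u v := by funext i; fin_cases i <;> simp <;> ring
  map_smul' r u := by funext i; fin_cases i <;> simp <;> ring
  left_inv u := by funext i; fin_cases i <;> simp <;> field_simp <;> ring
  right_inv u := by funext i; fin_cases i <;> simp <;> field_simp <;> ring

lemma shearEquiv_apply (c1 c2 β : K) (hβ : β ≠ 0) (u : Fin 3 → K) :
    shearEquiv c1 c2 β hβ u = ![u 0 + c1 * u 2, u 1 + c2 * u 2, β * u 2] := rfl

lemma shearEquiv_apply_of_two_eq_zero (c1 c2 β : K) (hβ : β ≠ 0) {u : Fin 3 → K}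
    (hu : u 2 = 0) : shearEquiv c1 c2 β hβ u = u := by
  funext i; fin_cases i <;> simp [shearEquiv_apply, hu]

lemma exists_eq_shearEquiv (φ : (Fin 3 → K) ≃ₗ[K] (Fin 3 → K))
    (hφ : ∀ u : Fin 3 → K, u 2 = 0 → φ u = u) :
    ∃ c1 c2 β : K, ∃ hβ : β ≠ 0, φ = shearEquiv c1 c2 β hβ := by
  set p := φ ![0, 0, 1] with hp
  have hβ : p 2 ≠ 0 := by
    intro h0
    have : ![0, 0, 1] = p := φ.injective (hφ p h0).symm
    simp [← this] at h0
  refine ⟨p 0, p 1, p 2, hβ, LinearEquiv.ext fun v => ?_⟩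
  have hv : v = ![v 0, v 1, 0] + v 2 • ![0, 0, 1] := by funext i; fin_cases i <;> simp
  rw [hv, map_add, map_smul, hφ _ rfl, ← hp]
  funext i; fin_cases i <;> simp [shearEquiv_apply] <;> ring

end Shear

lemma gdequiv3_B4br_iff (m m' : (Fin 3 → ℂ) → (Fin 3 → ℂ) → (Fin 3 → ℂ)) :
    GDequiv3 m B4br m' B4br ↔ ∃ c1 c2 β : ℂ, ∃ hβ : β ≠ 0, ∀ u v,
      shearEquiv c1 c2 β hβ (m u v) = m' (shearEquiv c1 c2 β hβ u) (shearEquiv c1 c2 β hβ v) := by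
  constructor
  · rintro ⟨φ, hm, -, hφ⟩
    obtain ⟨c1, c2, β, hβ, rfl⟩ := exists_eq_shearEquiv φ hφ
    exact ⟨c1, c2, β, hβ, hm⟩
  · rintro ⟨c1, c2, β, hβ, hm⟩
    exact ⟨_, hm, fun _ _ => by simp [B4br],
      fun _ hu => shearEquiv_apply_of_two_eq_zero c1 c2 β hβ hu⟩

lemma B4mul_isNovikov (b1 b2 b3 : ℂ) : IsNovikov (B4mul b1 b2 b3) := by
  constructor <;> intro a b c <;> funext i <;> fin_cases i <;> simp [B4mul] <;> ring

lemma B4mul_isGD (b1 b2 b3 : ℂ) : IsGD (B4mul b1 b2 b3) B4br :=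
  isGD_zero_bracket (B4mul_isNovikov b1 b2 b3) (fun _ => by simp [B4mul]) (fun _ => by simp [B4mul])

lemma B4mul_of_two_eq_zero (b1 b2 b3 : ℂ) {u v : Fin 3 → ℂ} (hu : u 2 = 0) (hv : v 2 = 0) :
    B4mul b1 b2 b3 u v = ![u 0 * v 0, u 1 * v 0, 0] := by
  funext i; fin_cases i <;> simp [B4mul, hu, hv]

lemma shearEquiv_B4mul_iff (b1 b2 b3 b1' b2' b3' c1 c2 β : ℂ) (hβ : β ≠ 0) :
    (∀ u v, shearEquiv c1 c2 β hβ (B4mul b1 b2 b3 u v) =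
        B4mul b1' b2' b3' (shearEquiv c1 c2 β hβ u) (shearEquiv c1 c2 β hβ v)) ↔
      b1 = b1' ∧ b2 = β * b2' + c1 ∧ b3 = β * b3' - b1 * c2 := by
  constructor
  · intro h
    have hLx := h ![1, 0, 0] ![0, 0, 1]
    have hWx := h ![0, 1, 0] ![0, 0, 1]
    have hLx2 := congrFun hLx 2
    have hLx1 := congrFun hLx 1
    have hWx1 := congrFun hWx 1
    simp only [shearEquiv_apply, B4mul, Matrix.cons_val_zero, Matrix.cons_val_one, Matrix.cons_val,
      mul_zero, mul_one, one_mul, zero_mul, zero_add, add_zero, sub_zero, sub_self]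
      at hLx2 hLx1 hWx1
    exact ⟨mul_right_cancel₀ hβ (by linear_combination hLx2), by linear_combination hWx1,
      by linear_combination hLx1⟩
  · rintro ⟨rfl, rfl, rfl⟩ u v
    funext i; fin_cases i <;> simp [shearEquiv_apply, B4mul] <;> ring

theorem B4_equiv_iff (b1 b2 b3 b1' b2' b3' : ℂ) :
    GDequiv3 (B4mul b1 b2 b3) B4br (B4mul b1' b2' b3') B4br ↔
      ∃ c1 c2 β : ℂ, β ≠ 0 ∧ b1 = b1' ∧ b2 = β * b2' + c1 ∧ b3 = β * b3' - b1 * c2 := by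
  simp only [gdequiv3_B4br_iff, shearEquiv_B4mul_iff, exists_prop]

lemma eq_of_B4_equiv {b1 b2 b3 b1' b2' b3' : ℂ}
    (h : GDequiv3 (B4mul b1 b2 b3) B4br (B4mul b1' b2' b3') B4br) : b1 = b1' := by
  obtain ⟨_, _, _, _, h1, -⟩ := (B4_equiv_iff _ _ _ _ _ _).mp h
  exact h1

lemma B4_equiv_normalForm (b1 b2 b3 : ℂ) :
    GDequiv3 (B4mul b1 b2 b3) B4br (B4mul 0 0 0) B4br ∨
      GDequiv3 (B4mul b1 b2 b3) B4br (B4mul 0 0 1) B4br ∨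
      ∃ c : ℂ, c ≠ 0 ∧ GDequiv3 (B4mul b1 b2 b3) B4br (B4mul c 0 0) B4br := by
  simp only [B4_equiv_iff]
  by_cases h1 : b1 = 0
  · subst h1
    by_cases h3 : b3 = 0
    · exact Or.inl ⟨b2, 0, 1, one_ne_zero, rfl, by ring, by simp [h3]⟩
    · exact Or.inr (Or.inl ⟨b2, 0, b3, h3, rfl, by ring, by ring⟩)
  · exact Or.inr (Or.inr ⟨b1, h1, b2, -b3 / b1, 1, one_ne_zero, rfl, by ring, by field_simp; ring⟩)

theorem caseB4 :
    (∀ b1 b2 b3 : ℂ, IsGD (B4mul b1 b2 b3) B4br ∧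
      ∀ u v : Fin 3 → ℂ, u 2 = 0 → v 2 = 0 →
        B4mul b1 b2 b3 u v = ![u 0 * v 0, u 1 * v 0, 0] ∧
        B4br u v = 0) ∧
    (∀ b1 b2 b3 b1' b2' b3' : ℂ,
      GDequiv3 (B4mul b1 b2 b3) B4br (B4mul b1' b2' b3') B4br ↔
        ∃ c1 c2 β : ℂ, β ≠ 0 ∧ b1 = b1' ∧ b2 = β * b2' + c1 ∧ b3 = β * b3' - b1 * c2) ∧
    -- (iii) the equivalence classes are represented exactly by
    -- B4_{0,0,0}, B4_{0,0,1} and B4_{b1,0,0} for b1 ≠ 0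
    (∀ b1 b2 b3 : ℂ,
      GDequiv3 (B4mul b1 b2 b3) B4br (B4mul 0 0 0) B4br ∨
      GDequiv3 (B4mul b1 b2 b3) B4br (B4mul 0 0 1) B4br ∨
      ∃ c : ℂ, c ≠ 0 ∧ GDequiv3 (B4mul b1 b2 b3) B4br (B4mul c 0 0) B4br) ∧
    ¬ GDequiv3 (B4mul 0 0 0) B4br (B4mul 0 0 1) B4br ∧
    (∀ c : ℂ, c ≠ 0 →
      ¬ GDequiv3 (B4mul 0 0 0) B4br (B4mul c 0 0) B4br ∧
      ¬ GDequiv3 (B4mul 0 0 1) B4br (B4mul c 0 0) B4br) ∧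
    (∀ c c' : ℂ, c ≠ 0 → c' ≠ 0 →
      (GDequiv3 (B4mul c 0 0) B4br (B4mul c' 0 0) B4br ↔ c = c')) := by
  refine ⟨fun b1 b2 b3 => ⟨B4mul_isGD b1 b2 b3,
      fun u v hu hv => ⟨B4mul_of_two_eq_zero b1 b2 b3 hu hv, rfl⟩⟩,
    B4_equiv_iff, B4_equiv_normalForm, fun h => ?_,
    fun c hc => ⟨fun h => hc (eq_of_B4_equiv h).symm, fun h => hc (eq_of_B4_equiv h).symm⟩,
    fun c c' _ _ => ⟨eq_of_B4_equiv, ?_⟩⟩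
  · obtain ⟨_, _, β, hβ, -, -, h3⟩ := (B4_equiv_iff _ _ _ _ _ _).mp h
    exact hβ (by linear_combination -h3)
  · rintro rfl
    exact ⟨LinearEquiv.refl ℂ _, fun _ _ => rfl, fun _ _ => rfl, fun _ _ => rfl⟩

end GDExt
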